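/- arXiv:1302.3738 — 2 statements merged into one kernel-verified Lean document; each statement's English description precedes it below -/
import Mathlib

section
/- Let α > 0 and define P_α(x) = H_α(x + i v_α(x)) (which is real for every x ∈ ℝ). Then P_α(x) = x + α + α∫₀^∞ t e^{-t}/(x − t) dt for x < -c_α, and P_α(x) = 2x + α − α∫₀^∞ t² e^{-t}/((x − t)² + v_α(x)²) dt for x ≥ -c_α. -/
open MeasureTheory Set Filter

/-- `F(x+iy) = ∫₀^∞ t e^{-t}/((x-t)² + y²) dt`. -/
noncomputable def Fint (x y : ℝ) : ℝ :=
  ∫ t in Set.Ioi (0:ℝ), t * Real.exp (-t) / ((x - t)^2 + y^2)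

/-- `H_α(z) = z + α + α ∫₀^∞ t e^{-t}/(z-t) dt`. -/
noncomputable def Hfun (α : ℝ) (z : ℂ) : ℂ :=
  z + (α : ℂ) + (α : ℂ) * ∫ t in Set.Ioi (0:ℝ), ((t * Real.exp (-t) : ℝ) : ℂ) / (z - (t : ℂ))

/-!
For `z = x + iy` off `[0, ∞)` (i.e. `x < 0 ∨ y ≠ 0`, which keeps `|z - t|²` bounded away from `0`
for `t > 0`), splitting `1/(z - t) = ((x - t) - iy)/|z - t|²` gives
`H_α(z) = x + α + α ∫ t e^{-t} (x - t)/|z - t|² dt + i y (1 - α F(z))`.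
The imaginary part vanishes at `y = v_α(x)`: either `v_α(x) = 0`, or `α F = 1` (for `x = -c_α`
this is the defining equation of `c_α`). Below `-c_α` the real part is the stated integral since
`y = 0`; above, `t e^{-t} (x - t) = x t e^{-t} - t² e^{-t}` and `α F = 1` turn
`α ∫ t e^{-t} (x - t)/|z - t|² dt` into `x - α ∫ t² e^{-t}/|z - t|² dt`.
-/

lemma integrableOn_Ioi_pow_mul_exp_neg (n : ℕ) :
    IntegrableOn (fun t : ℝ => t ^ n * Real.exp (-t)) (Ioi 0) := by
  refine (Real.GammaIntegral_convergent (s := n + 1) (by positivity)).congr_fun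
    (fun t _ => ?_) measurableSet_Ioi
  dsimp only
  rw [add_sub_cancel_right, Real.rpow_natCast, mul_comm]

lemma integrableOn_Ioi_mul_exp_neg : IntegrableOn (fun t : ℝ => t * Real.exp (-t)) (Ioi 0) := by
  simpa only [pow_one] using integrableOn_Ioi_pow_mul_exp_neg 1

lemma exists_pos_le_sub_sq_add_sq {x y : ℝ} (hxy : x < 0 ∨ y ≠ 0) :
    ∃ m > 0, ∀ t ∈ Ioi (0:ℝ), m ≤ (x - t) ^ 2 + y ^ 2 := by
  rcases hxy with hx | hy
  · exact ⟨x ^ 2, by nlinarith, fun t (ht : 0 < t) => by nlinarith [sq_nonneg y]⟩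
  · exact ⟨y ^ 2, by positivity, fun t _ => by nlinarith [sq_nonneg (x - t)]⟩

lemma IntegrableOn.div_sub_sq_add_sq {f : ℝ → ℝ} (hf : IntegrableOn f (Ioi 0)) {x y : ℝ}
    (hxy : x < 0 ∨ y ≠ 0) :
    IntegrableOn (fun t => f t / ((x - t) ^ 2 + y ^ 2)) (Ioi 0) := by
  obtain ⟨m, hm, hD⟩ := exists_pos_le_sub_sq_add_sq hxy
  refine hf.mul_bdd (c := m⁻¹) (by fun_prop : Measurable _).aestronglyMeasurable ?_
  filter_upwards [ae_restrict_mem measurableSet_Ioi] with t ht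
  rw [norm_inv, Real.norm_of_nonneg (hm.trans_le (hD t ht)).le]
  exact inv_anti₀ hm (hD t ht)

namespace Complex

lemma ofReal_div_ofReal_add_mul_I (a u y : ℝ) :
    (a : ℂ) / (u + y * I) = ((a * u / (u ^ 2 + y ^ 2) : ℝ) : ℂ)
      - ((a * y / (u ^ 2 + y ^ 2) : ℝ) : ℂ) * I := by
  apply Complex.ext <;>
    simp only [div_re, div_im, normSq_apply, add_re, add_im, sub_re, sub_im, mul_re, mul_im,
      ofReal_re, ofReal_im, I_re, I_im, mul_zero, zero_mul, mul_one, sub_zero, add_zero,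
      zero_add, ← sq] <;>
    ring

end Complex

section CauchyIntegral

open Complex

variable {x y : ℝ}

lemma integral_mul_exp_neg_div_ofReal_add_mul_I_sub (hxy : x < 0 ∨ y ≠ 0) :
    ∫ t in Ioi (0:ℝ), ((t * Real.exp (-t) : ℝ) : ℂ) / ((x : ℂ) + (y : ℝ) * I - t) =
      ((∫ t in Ioi (0:ℝ), t * Real.exp (-t) * (x - t) / ((x - t) ^ 2 + y ^ 2) : ℝ) : ℂ)
        - ((y * Fint x y : ℝ) : ℂ) * I := by
  have hre : IntegrableOn
      (fun t => ((t * Real.exp (-t) * (x - t) / ((x - t) ^ 2 + y ^ 2) : ℝ) : ℂ)) (Ioi 0) := by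
    refine Integrable.ofReal (IntegrableOn.div_sub_sq_add_sq ?_ hxy)
    refine IntegrableOn.congr_fun ((integrableOn_Ioi_mul_exp_neg.const_mul x).sub
      (integrableOn_Ioi_pow_mul_exp_neg 2)) (fun t _ => ?_) measurableSet_Ioi
    simp only [Pi.sub_apply]
    ring
  have him : IntegrableOn
      (fun t => ((t * Real.exp (-t) * y / ((x - t) ^ 2 + y ^ 2) : ℝ) : ℂ)) (Ioi 0) :=
    (IntegrableOn.div_sub_sq_add_sq (integrableOn_Ioi_mul_exp_neg.mul_const y) hxy).ofReal
  have hpt (t : ℝ) : ((t * Real.exp (-t) : ℝ) : ℂ) / ((x : ℂ) + (y : ℝ) * I - t) =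
      ((t * Real.exp (-t) * (x - t) / ((x - t) ^ 2 + y ^ 2) : ℝ) : ℂ)
        - ((t * Real.exp (-t) * y / ((x - t) ^ 2 + y ^ 2) : ℝ) : ℂ) * I := by
    have hz : (x : ℂ) + (y : ℝ) * I - t = ((x - t : ℝ) : ℂ) + (y : ℝ) * I := by
      push_cast; ring
    rw [hz, ofReal_div_ofReal_add_mul_I]
  have hFint :
      ∫ t in Ioi (0:ℝ), t * Real.exp (-t) * y / ((x - t) ^ 2 + y ^ 2) = y * Fint x y := by
    rw [Fint, ← integral_const_mul]
    congr 1 with t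
    ring
  simp_rw [hpt]
  rw [integral_sub hre (him.mul_const I), integral_mul_const, integral_complex_ofReal,
    integral_complex_ofReal, hFint]

lemma integral_mul_exp_neg_mul_sub_div (hxy : x < 0 ∨ y ≠ 0) :
    ∫ t in Ioi (0:ℝ), t * Real.exp (-t) * (x - t) / ((x - t) ^ 2 + y ^ 2) =
      x * Fint x y - ∫ t in Ioi (0:ℝ), t ^ 2 * Real.exp (-t) / ((x - t) ^ 2 + y ^ 2) := by
  rw [Fint, ← integral_const_mul, ← integral_sub
    ((IntegrableOn.div_sub_sq_add_sq integrableOn_Ioi_mul_exp_neg hxy).const_mul x)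
    (IntegrableOn.div_sub_sq_add_sq (integrableOn_Ioi_pow_mul_exp_neg 2) hxy)]
  congr 1 with t
  ring

lemma Hfun_ofReal_add_mul_I (α : ℝ) (hxy : x < 0 ∨ y ≠ 0) :
    Hfun α (x + y * I) =
      ((x + α + α * ∫ t in Ioi (0:ℝ),
          t * Real.exp (-t) * (x - t) / ((x - t) ^ 2 + y ^ 2) : ℝ) : ℂ)
        + ((y * (1 - α * Fint x y) : ℝ) : ℂ) * I := by
  rw [Hfun, integral_mul_exp_neg_div_ofReal_add_mul_I_sub hxy]
  push_cast
  ring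

lemma Hfun_ofReal_add_mul_I_eq_ofReal (α : ℝ) (hxy : x < 0 ∨ y ≠ 0)
    (hy : y = 0 ∨ α * Fint x y = 1) :
    Hfun α (x + y * I) =
      ((x + α + α * ∫ t in Ioi (0:ℝ),
          t * Real.exp (-t) * (x - t) / ((x - t) ^ 2 + y ^ 2) : ℝ) : ℂ) := by
  have him : y * (1 - α * Fint x y) = 0 := by rcases hy with h | h <;> simp [h]
  rw [Hfun_ofReal_add_mul_I α hxy, him, ofReal_zero, zero_mul, add_zero]

end CauchyIntegral

lemma Fint_neg_zero (c : ℝ) :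
    Fint (-c) 0 = ∫ t in Ioi (0:ℝ), t * Real.exp (-t) / (c + t) ^ 2 := by
  rw [Fint]
  congr 1 with t
  ring

theorem free_gamma_P_formulas_general
    (α : ℝ) (hα : 0 < α) (c : ℝ) (hc : 0 < c)
    (hceq : (∫ t in Set.Ioi (0:ℝ), t * Real.exp (-t) / (c + t)^2) = 1/α)
    (v : ℝ → ℝ) (hv0 : ∀ x ≤ -c, v x = 0)
    (hvpos : ∀ x, -c < x → 0 < v x)
    (hveq : ∀ x, -c < x → Fint x (v x) = 1/α)
    (P : ℝ → ℝ)
    (hP : ∀ x : ℝ, ((P x : ℝ) : ℂ) = Hfun α ((x : ℂ) + (v x : ℝ) * Complex.I)) :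
    (∀ x : ℝ, x < -c →
      P x = x + α + α * ∫ t in Set.Ioi (0:ℝ), t * Real.exp (-t) / (x - t)) ∧
    (∀ x : ℝ, -c ≤ x →
      P x = 2*x + α - α * ∫ t in Set.Ioi (0:ℝ),
        t^2 * Real.exp (-t) / ((x - t)^2 + (v x)^2)) := by
  have hPx (x : ℝ) (hxy : x < 0 ∨ v x ≠ 0) (hv : v x = 0 ∨ α * Fint x (v x) = 1) :
      P x = x + α + α * ∫ t in Ioi (0:ℝ),
        t * Real.exp (-t) * (x - t) / ((x - t) ^ 2 + (v x) ^ 2) :=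
    Complex.ofReal_inj.mp ((hP x).trans (Hfun_ofReal_add_mul_I_eq_ofReal α hxy hv))
  refine ⟨fun x hx => ?_, fun x hx => ?_⟩
  · have hvx := hv0 x hx.le
    rw [hPx x (Or.inl (by linarith)) (Or.inl hvx), hvx]
    congr 2
    refine setIntegral_congr_fun measurableSet_Ioi fun t (ht : 0 < t) => ?_
    have : x - t ≠ 0 := by linarith
    rw [zero_pow two_ne_zero, add_zero, sq, mul_div_mul_right _ _ this]
  · obtain ⟨hxy, hF⟩ : (x < 0 ∨ v x ≠ 0) ∧ α * Fint x (v x) = 1 := by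
      rcases hx.eq_or_lt with rfl | hx
      · refine ⟨Or.inl (by linarith), ?_⟩
        rw [hv0 _ le_rfl, Fint_neg_zero, hceq]
        field_simp
      · exact ⟨Or.inr (hvpos x hx).ne', by rw [hveq x hx]; field_simp⟩
    rw [hPx x hxy (Or.inr hF), integral_mul_exp_neg_mul_sub_div hxy]
    linear_combination x * hF

/-- the explicit formulas for `P_α(x) = H_α(x + i v_α(x))`
below and above `-c_α`. -/
theorem free_gamma_P_formulas
    (α : ℝ) (hα : 0 < α) (c : ℝ) (hc : 0 < c)
    (hceq : (∫ t in Set.Ioi (0:ℝ), t * Real.exp (-t) / (c + t)^2) = 1/α)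
    (v : ℝ → ℝ) (hv0 : ∀ x ≤ -c, v x = 0)
    (hvpos : ∀ x, -c < x → 0 < v x)
    (hveq : ∀ x, -c < x → Fint x (v x) = 1/α)
    (hvuniq : ∀ x, -c < x → ∀ y, 0 < y → Fint x y = 1/α → y = v x)
    (P : ℝ → ℝ)
    (hP : ∀ x : ℝ, ((P x : ℝ) : ℂ) = Hfun α ((x : ℂ) + (v x : ℝ) * Complex.I)) :
    (∀ x : ℝ, x < -c →
      P x = x + α + α * ∫ t in Set.Ioi (0:ℝ), t * Real.exp (-t) / (x - t)) ∧
    (∀ x : ℝ, -c ≤ x →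
      P x = 2*x + α - α * ∫ t in Set.Ioi (0:ℝ),
        t^2 * Real.exp (-t) / ((x - t)^2 + (v x)^2)) :=
  free_gamma_P_formulas_general α hα c hc hceq v hv0 hvpos hveq P hP
end

section
/- Let α > 0. Then lim_{x→∞} ( x + α − P_α(x) ) = 0. -/
open MeasureTheory Set Filter

/-!
Write `z = x + iy`, so that `x + α - P_α(x) = -α ∫₀^∞ t e^{-t} (x - t) / |z - t|² dt`,
and note `|x - t| / |z - t|² ≤ 1 / |x - t|`. Split at `|x - t| = x/2` and at
`|x - t| = δ := e^{-x/16}`: the far part is `O(1/x)`; the middle part has `t > x/2`, where the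
weight `t e^{-t}` is so small that it is `O(δ)`; the part with `|x - t| < δ` is at most
`δ F(z) = δ/α`, whatever `y` is.
-/

open Real

lemma integrableOn_mul_exp_neg_Ioi : IntegrableOn (fun t => t * exp (-t)) (Ioi 0) := by
  refine (GammaIntegral_convergent two_pos).congr_fun (fun t _ => ?_) measurableSet_Ioi
  norm_num [mul_comm]

lemma integral_mul_exp_neg_Ioi : ∫ t in Ioi (0:ℝ), t * exp (-t) = 1 := by
  rw [← Gamma_two, Gamma_eq_integral two_pos]
  refine setIntegral_congr_fun measurableSet_Ioi (fun t _ => ?_)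
  norm_num [mul_comm]

lemma integrableOn_exp_neg_div_four_Ioi : IntegrableOn (fun t => exp (-t / 4)) (Ioi 0) := by
  simpa [neg_div, div_eq_inv_mul] using integrableOn_exp_mul_Ioi (a := -4⁻¹) (by norm_num) 0

lemma integral_exp_neg_div_four_Ioi : ∫ t in Ioi (0:ℝ), exp (-t / 4) = 4 := by
  simpa [neg_div, div_eq_inv_mul] using integral_exp_mul_Ioi (a := -4⁻¹) (by norm_num) 0

lemma mul_exp_neg_le_two_mul_exp_neg_half (t : ℝ) : t * exp (-t) ≤ 2 * exp (-t / 2) := by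
  have h : t ≤ 2 * exp (t / 2) := by linarith [add_one_le_exp (t / 2)]
  calc t * exp (-t) ≤ 2 * exp (t / 2) * exp (-t) := by gcongr
    _ = 2 * exp (-t / 2) := by rw [mul_assoc, ← exp_add]; ring_nf

lemma abs_div_sq_add_sq_le_inv_abs (u y : ℝ) : |u| / (u ^ 2 + y ^ 2) ≤ |u|⁻¹ := by
  rcases eq_or_ne u 0 with rfl | hu
  · simp
  calc |u| / (u ^ 2 + y ^ 2) ≤ |u| / |u| ^ 2 := by
        gcongr
        rw [sq_abs]; linarith [sq_nonneg y]
    _ = |u|⁻¹ := by field_simp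

lemma mul_exp_neg_le_of_half_lt {x t : ℝ} (h : x / 2 < t) :
    t * exp (-t) ≤ 2 * exp (-x / 16) ^ 2 * exp (-t / 4) := by
  calc t * exp (-t) ≤ 2 * exp (-t / 2) := mul_exp_neg_le_two_mul_exp_neg_half t
    _ = 2 * exp (-t / 4) * exp (-t / 4) := by rw [mul_assoc, ← exp_add]; ring_nf
    _ ≤ 2 * exp (-x / 8) * exp (-t / 4) := by gcongr 2 * exp ?_ * _; linarith
    _ = 2 * exp (-x / 16) ^ 2 * exp (-t / 4) := by rw [sq, ← exp_add]; ring_nf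

lemma abs_mul_exp_neg_mul_div_le {x t y : ℝ} (hx : 0 < x) (ht : 0 < t) (hy : y ≠ 0) :
    |t * exp (-t) * (x - t) / ((x - t) ^ 2 + y ^ 2)| ≤
      2 / x * (t * exp (-t)) + 2 * exp (-x / 16) * exp (-t / 4) +
        exp (-x / 16) * (t * exp (-t) / ((x - t) ^ 2 + y ^ 2)) := by
  set δ := exp (-x / 16)
  set w := t * exp (-t)
  set D := (x - t) ^ 2 + y ^ 2
  have hw : 0 ≤ w := by positivity
  have hD : 0 < D := by positivity
  have hδ : 0 < δ := exp_pos _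
  have hq := abs_div_sq_add_sq_le_inv_abs (x - t) y
  have h₁ : 0 ≤ 2 / x * w := by positivity
  have h₂ : 0 ≤ 2 * δ * exp (-t / 4) := by positivity
  have h₃ : 0 ≤ δ * (w / D) := by positivity
  rw [mul_div_assoc, abs_mul, abs_of_nonneg hw, abs_div, abs_of_pos hD]
  rcases le_or_gt (x / 2) |x - t| with hfar | hnear
  · have : |x - t| / D ≤ 2 / x := by
      calc |x - t| / D ≤ |x - t|⁻¹ := hq
        _ ≤ (x / 2)⁻¹ := by gcongr
        _ = 2 / x := by rw [inv_div]
    nlinarith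
  rcases lt_or_ge |x - t| δ with hclose | hmid
  · have : w * (|x - t| / D) ≤ δ * (w / D) := by
      rw [mul_div_left_comm]
      gcongr
    linarith
  · have hxt : x / 2 < t := by linarith [(abs_lt.1 hnear).2]
    have : w * (|x - t| / D) ≤ 2 * δ * exp (-t / 4) := by
      calc w * (|x - t| / D) ≤ w * δ⁻¹ := by
            gcongr
            exact hq.trans (inv_anti₀ hδ hmid)
        _ ≤ 2 * δ * exp (-t / 4) := by
            rw [← div_eq_mul_inv, div_le_iff₀ hδ]
            linarith [mul_exp_neg_le_of_half_lt hxt]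
    linarith

lemma integrableOn_Fint_integrand (x : ℝ) {y : ℝ} (hy : y ≠ 0) :
    IntegrableOn (fun t => t * exp (-t) / ((x - t) ^ 2 + y ^ 2)) (Ioi 0) := by
  have hD (t : ℝ) : (x - t) ^ 2 + y ^ 2 ≠ 0 := by positivity
  refine (integrableOn_mul_exp_neg_Ioi.div_const (y ^ 2)).mono'
    ((Continuous.div (by fun_prop) (by fun_prop) hD).aestronglyMeasurable) ?_
  filter_upwards [ae_restrict_mem measurableSet_Ioi] with t (ht : 0 < t)
  rw [Real.norm_of_nonneg (by positivity)]
  gcongr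
  nlinarith [sq_nonneg (x - t)]

lemma integrableOn_Hfun_integrand (x : ℝ) {y : ℝ} (hy : y ≠ 0) :
    IntegrableOn (fun t : ℝ => ((t * exp (-t) : ℝ) : ℂ) / ((x : ℂ) + y * Complex.I - t))
      (Ioi 0) := by
  have hne (t : ℝ) : (x : ℂ) + y * Complex.I - t ≠ 0 := fun h =>
    hy (by simpa using congrArg Complex.im h)
  refine (integrableOn_mul_exp_neg_Ioi.div_const |y|).mono'
    ((Continuous.div (by fun_prop) (by fun_prop) hne).aestronglyMeasurable) ?_
  filter_upwards [ae_restrict_mem measurableSet_Ioi] with t (ht : 0 < t)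
  rw [norm_div, Complex.norm_real, Real.norm_of_nonneg (by positivity)]
  gcongr
  simpa using Complex.abs_im_le_norm ((x : ℂ) + y * Complex.I - t)

lemma re_Hfun (α x : ℝ) {y : ℝ} (hy : y ≠ 0) :
    (Hfun α ((x : ℂ) + y * Complex.I)).re =
      x + α + α * ∫ t in Ioi 0, t * exp (-t) * (x - t) / ((x - t) ^ 2 + y ^ 2) := by
  have hre (t : ℝ) : (((t * exp (-t) : ℝ) : ℂ) / ((x : ℂ) + y * Complex.I - t)).re =
      t * exp (-t) * (x - t) / ((x - t) ^ 2 + y ^ 2) := by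
    simp only [Complex.div_re, Complex.normSq_apply, Complex.ofReal_re, Complex.ofReal_im,
      Complex.sub_re, Complex.add_re, Complex.mul_re, Complex.sub_im, Complex.add_im,
      Complex.mul_im, Complex.I_re, Complex.I_im]
    ring
  have hint := integral_re (integrableOn_Hfun_integrand x hy)
  simp only [RCLike.re_to_complex, hre] at hint
  rw [Hfun, Complex.add_re, Complex.re_ofReal_mul, ← hint]
  simp

lemma abs_integral_mul_exp_neg_mul_div_le {x y : ℝ} (hx : 0 < x) (hy : y ≠ 0) :
    |∫ t in Ioi 0, t * exp (-t) * (x - t) / ((x - t) ^ 2 + y ^ 2)| ≤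
      2 / x + 8 * exp (-x / 16) + exp (-x / 16) * Fint x y := by
  have hint₁ := integrableOn_mul_exp_neg_Ioi.const_mul (2 / x)
  have hint₂ := integrableOn_exp_neg_div_four_Ioi.const_mul (2 * exp (-x / 16))
  have hint₃ := (integrableOn_Fint_integrand x hy).const_mul (exp (-x / 16))
  rw [← Real.norm_eq_abs]
  refine (norm_integral_le_of_norm_le ((hint₁.add hint₂).add hint₃) ?_).trans_eq ?_
  · filter_upwards [ae_restrict_mem measurableSet_Ioi] with t (ht : 0 < t)
    exact abs_mul_exp_neg_mul_div_le hx ht hy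
  · rw [integral_add' (hint₁.add hint₂) hint₃, integral_add' hint₁ hint₂,
      integral_const_mul, integral_const_mul, integral_const_mul, integral_mul_exp_neg_Ioi,
      integral_exp_neg_div_four_Ioi, Fint]
    ring

lemma abs_add_sub_re_Hfun_le {α x y : ℝ} (hα : 0 ≤ α) (hx : 0 < x) (hy : y ≠ 0) :
    |x + α - (Hfun α ((x : ℂ) + y * Complex.I)).re| ≤
      α * (2 / x + 8 * exp (-x / 16)) + exp (-x / 16) * (α * Fint x y) := by
  rw [re_Hfun α x hy, show ∀ a b : ℝ, x + α - (x + α + a * b) = -(a * b) by intros; ring,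
    abs_neg, abs_mul, abs_of_nonneg hα]
  nlinarith [abs_integral_mul_exp_neg_mul_div_le hx hy]

theorem free_gamma_P_asymptotics_general
    (α : ℝ) (hα : 0 < α) (c : ℝ)
    (v : ℝ → ℝ)
    (hvpos : ∀ x, -c < x → 0 < v x)
    (hveq : ∀ x, -c < x → Fint x (v x) = 1/α)
    (P : ℝ → ℝ)
    (hP : ∀ x : ℝ, ((P x : ℝ) : ℂ) = Hfun α ((x : ℂ) + (v x : ℝ) * Complex.I)) :
    Filter.Tendsto (fun x => x + α - P x) Filter.atTop (nhds 0) := by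
  have hexp : Tendsto (fun x : ℝ => exp (-x / 16)) atTop (nhds 0) :=
    tendsto_exp_comp_nhds_zero.2 (tendsto_neg_atTop_atBot.atBot_div_const (by norm_num))
  have hinv : Tendsto (fun x : ℝ => 2 / x) atTop (nhds 0) :=
    tendsto_const_nhds.div_atTop tendsto_id
  have hbound : Tendsto (fun x : ℝ => α * (2 / x + 8 * exp (-x / 16)) + exp (-x / 16))
      atTop (nhds 0) := by
    simpa using ((hinv.add (hexp.const_mul 8)).const_mul α).add hexp
  rw [tendsto_zero_iff_abs_tendsto_zero]
  refine squeeze_zero' (.of_forall fun x => abs_nonneg _) ?_ hbound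
  filter_upwards [eventually_gt_atTop 0, eventually_gt_atTop (-c)] with x hx hxc
  have hPx : P x = (Hfun α ((x : ℂ) + (v x : ℝ) * Complex.I)).re := by
    rw [← hP, Complex.ofReal_re]
  have hαF : α * Fint x (v x) = 1 := by rw [hveq x hxc]; field_simp
  simpa [hPx, hαF] using abs_add_sub_re_Hfun_le hα.le hx (hvpos x hxc).ne'

/-- `lim_{x→∞} (x + α − P_α(x)) = 0`. -/
theorem free_gamma_P_asymptotics
    (α : ℝ) (hα : 0 < α) (c : ℝ) (hc : 0 < c)
    (hceq : (∫ t in Set.Ioi (0:ℝ), t * Real.exp (-t) / (c + t)^2) = 1/α)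
    (v : ℝ → ℝ) (hv0 : ∀ x ≤ -c, v x = 0)
    (hvpos : ∀ x, -c < x → 0 < v x)
    (hveq : ∀ x, -c < x → Fint x (v x) = 1/α)
    (hvuniq : ∀ x, -c < x → ∀ y, 0 < y → Fint x y = 1/α → y = v x)
    (P : ℝ → ℝ)
    (hP : ∀ x : ℝ, ((P x : ℝ) : ℂ) = Hfun α ((x : ℂ) + (v x : ℝ) * Complex.I)) :
    Filter.Tendsto (fun x => x + α - P x) Filter.atTop (nhds 0) :=
  free_gamma_P_asymptotics_general α hα c v hvpos hveq P hP
end
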